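/- Let κ ∈ ℝ, δ > 0, and suppose L satisfies CD_Υ(κ,F) at some point x ∈ X with M₁(x) > 0, where F is a CD-function satisfying lim_{r→0⁺} F(r)/r^{1+δ} = 1. Then δ ≥ 1. -/

import Mathlib

/-!
Test the curvature-dimension inequality at `x` with the single-site function `f = s • 𝟙_{x}`.
Then `-L f(x) = s M₁(x)`, whereas `Ψ_Υ(f)(x)` and `Ψ_{2,Υ}(f)(x)` are `O(s²)` as `s → 0⁺`
because `Υ(r)` and `r Υ'(r)` vanish to second order at `0`. Hence `F(r) = O(r²)` as `r → 0⁺`,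
which is incompatible with `F(r) ~ r^{1+δ}` unless `δ ≥ 1`.
-/

open Real Filter MeasureTheory Set

/-- `Υ(r) = e^r - r - 1`. -/
noncomputable def Ups (r : ℝ) : ℝ := Real.exp r - r - 1

/-- `M₁(x) = ∑_{y ≠ x} k(x,y)`. -/
noncomputable def M1fn {X : Type*} (k : X → X → ℝ) (x : X) : ℝ :=
  ∑' y : {y : X // y ≠ x}, k x y

/-- The Markov generator `L f(x) = ∑_y k(x,y)(f(y) - f(x))`. -/
noncomputable def genOp {X : Type*} (k : X → X → ℝ) (f : X → ℝ) (x : X) : ℝ :=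
  ∑' y, k x y * (f y - f x)

/-- `Ψ_Υ(f)(x) = ∑_y k(x,y) Υ(f(y) - f(x))`. -/
noncomputable def psiUps {X : Type*} (k : X → X → ℝ) (f : X → ℝ) (x : X) : ℝ :=
  ∑' y, k x y * Ups (f y - f x)

/-- `B_{Υ'}(f,g)(x) = ∑_y k(x,y) Υ'(f(y)-f(x)) (g(y)-g(x))`. -/
noncomputable def bUps {X : Type*} (k : X → X → ℝ) (f g : X → ℝ) (x : X) : ℝ :=
  ∑' y, k x y * (Real.exp (f y - f x) - 1) * (g y - g x)

/-- `Ψ_{2,Υ}(f) = (1/2)(L Ψ_Υ(f) - B_{Υ'}(f, L f))`. -/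
noncomputable def psi2Ups {X : Type*} (k : X → X → ℝ) (f : X → ℝ) (x : X) : ℝ :=
  (1/2) * (genOp k (psiUps k f) x - bUps k f (genOp k f) x)

/-- Boundedness of a real-valued function on the state space. -/
def BddFun {X : Type*} (f : X → ℝ) : Prop := ∃ B : ℝ, ∀ x, |f x| ≤ B

/-- The standing assumptions on the transition rates: nonnegative off-diagonal rates,
`M₁(x) < ∞` (summability), `k(x,x) = -M₁(x)`, and `M₂(x) < ∞`. -/
def KernelSetting {X : Type*} (k : X → X → ℝ) : Prop :=
  (∀ x y, x ≠ y → 0 ≤ k x y) ∧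
  (∀ x : X, Summable fun y : {y : X // y ≠ x} => k x y) ∧
  (∀ x : X, k x x = -M1fn k x) ∧
  (∀ x : X, Summable fun y : {y : X // y ≠ x} => k x y * M1fn k y)

/-- A CD-function: continuous and nonnegative on `[0,∞)` with `F(0) = 0`, `F(r)/r`
strictly increasing on `(0,∞)` and `1/F` integrable at `∞`. -/
def IsCDFunction (F : ℝ → ℝ) : Prop :=
  ContinuousOn F (Ici 0) ∧ F 0 = 0 ∧ (∀ r : ℝ, 0 ≤ r → 0 ≤ F r) ∧
  StrictMonoOn (fun r => F r / r) (Ioi 0) ∧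
  ∃ c : ℝ, 0 < c ∧ IntegrableOn (fun r => 1 / F r) (Ioi c)

/-- The trivial extension `F₀` of `F : [0,∞) → [0,∞)` by `0` on `(-∞,0)`. -/
noncomputable def trivExt (F : ℝ → ℝ) : ℝ → ℝ := fun r => if 0 ≤ r then F r else 0

/-- The condition `CD_Υ(κ,F)` at a point `x`. -/
def CDUpsAt {X : Type*} (k : X → X → ℝ) (κ : ℝ) (F : ℝ → ℝ) (x : X) : Prop :=
  ∀ f : X → ℝ, BddFun f →
    κ * psiUps k f x + trivExt F (-genOp k f x) ≤ psi2Ups k f x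

/-- The condition `CD_Υ(κ,F)` (at every point). -/
def CDUps {X : Type*} (k : X → X → ℝ) (κ : ℝ) (F : ℝ → ℝ) : Prop :=
  ∀ x : X, CDUpsAt k κ F x

open Topology

theorem one_le_of_tendsto_div_rpow_of_le_sq {F : ℝ → ℝ} {δ l C : ℝ} (hl : 0 < l)
    (hlim : Tendsto (fun r => F r / r ^ (1 + δ)) (𝓝[>] 0) (𝓝 l))
    (hF : ∀ᶠ r in 𝓝[>] 0, F r ≤ C * r ^ 2) : 1 ≤ δ := by
  by_contra! hδ
  have hratio : ∀ᶠ r in 𝓝[>] (0 : ℝ), F r / r ^ (1 + δ) ≤ C * r ^ (1 - δ) := by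
    filter_upwards [hF, self_mem_nhdsWithin] with r hFr (hr : 0 < r)
    calc F r / r ^ (1 + δ) ≤ C * r ^ 2 / r ^ (1 + δ) := by gcongr
      _ = C * r ^ (1 - δ) := by
        rw [mul_div_assoc, ← Real.rpow_natCast, ← Real.rpow_sub hr]
        norm_num [sub_add_eq_sub_sub, one_add_one_eq_two.symm]
  have hpow : Tendsto (fun r : ℝ => r ^ (1 - δ)) (𝓝[>] 0) (𝓝 0) := by
    have := (Real.continuousAt_rpow_const 0 (1 - δ) (Or.inr (by linarith))).tendsto
    rw [Real.zero_rpow (by linarith)] at this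
    exact this.mono_left nhdsWithin_le_nhds
  linarith [le_of_tendsto_of_tendsto hlim (by simpa using hpow.const_mul C) hratio]

theorem Ups_zero : Ups 0 = 0 := by simp [Ups]

theorem Ups_nonneg (r : ℝ) : 0 ≤ Ups r := by
  rw [Ups]; linarith [Real.add_one_le_exp r]

theorem Ups_le_sq {r : ℝ} (hr : |r| ≤ 1) : Ups r ≤ r ^ 2 := by
  rw [Ups]; linarith [le_abs_self (Real.exp r - 1 - r), Real.abs_exp_sub_one_sub_id_le hr]

theorem tsum_eq_tsum_subtype_ne {X α : Type*} [AddCommMonoid α] [TopologicalSpace α]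
    {f : X → α} (x : X) {g : {y : X // y ≠ x} → α} (hx : f x = 0)
    (hfg : ∀ y : {y : X // y ≠ x}, f y = g y) :
    ∑' y, f y = ∑' y, g y := by
  rw [← tsum_subtype_eq_of_support_subset (s := {y | y ≠ x}) fun y hy (h : y = x) => hy (h ▸ hx)]
  exact tsum_congr hfg

noncomputable def roundTripRate {X : Type*} (k : X → X → ℝ) (x : X) : ℝ :=
  ∑' y : {y : X // y ≠ x}, k x y * k y x

section KernelSetting

variable {X : Type*} {k : X → X → ℝ}

theorem KernelSetting.M1fn_nonneg (hk : KernelSetting k) (x : X) : 0 ≤ M1fn k x :=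
  tsum_nonneg fun y => hk.1 x y (Ne.symm y.2)

theorem KernelSetting.roundTripRate_nonneg (hk : KernelSetting k) (x : X) :
    0 ≤ roundTripRate k x :=
  tsum_nonneg fun y => mul_nonneg (hk.1 x y (Ne.symm y.2)) (hk.1 y x y.2)

theorem KernelSetting.le_M1fn (hk : KernelSetting k) {x y : X} (hxy : x ≠ y) :
    k x y ≤ M1fn k x :=
  (hk.2.1 x).le_tsum ⟨y, Ne.symm hxy⟩ fun z _ => hk.1 x z (Ne.symm z.2)

theorem KernelSetting.summable_roundTrip (hk : KernelSetting k) (x : X) :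
    Summable fun y : {y : X // y ≠ x} => k x y * k y x :=
  (hk.2.2.2 x).of_nonneg_of_le (fun y => mul_nonneg (hk.1 x y (Ne.symm y.2)) (hk.1 y x y.2))
    fun y => mul_le_mul_of_nonneg_left (hk.le_M1fn y.2) (hk.1 x y (Ne.symm y.2))

end KernelSetting

section SingleSite

variable {X : Type*} [DecidableEq X] (k : X → X → ℝ) (x : X) (s : ℝ)

theorem bddFun_single : BddFun (Pi.single x s : X → ℝ) :=
  ⟨|s|, fun y => by rw [Pi.single_apply]; split_ifs <;> simp⟩

theorem genOp_single_self : genOp k (Pi.single x s) x = -(s * M1fn k x) :=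
  calc genOp k (Pi.single x s) x = ∑' y : {y : X // y ≠ x}, k x y * -s := by
        rw [genOp]
        exact tsum_eq_tsum_subtype_ne x (by simp) fun y => by simp [Pi.single_eq_of_ne y.2]
    _ = -(s * M1fn k x) := by rw [tsum_mul_right, M1fn]; ring

theorem genOp_single_of_ne {y : X} (hy : y ≠ x) : genOp k (Pi.single x s) y = k y x * s := by
  rw [genOp, tsum_eq_single x fun z hz => by simp [Pi.single_eq_of_ne hz, Pi.single_eq_of_ne hy]]
  simp [Pi.single_eq_of_ne hy]

theorem psiUps_single_self : psiUps k (Pi.single x s) x = Ups (-s) * M1fn k x :=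
  calc psiUps k (Pi.single x s) x = ∑' y : {y : X // y ≠ x}, Ups (-s) * k x y := by
        rw [psiUps]
        exact tsum_eq_tsum_subtype_ne x (by simp [Ups_zero]) fun y => by
          simp [Pi.single_eq_of_ne y.2, mul_comm]
    _ = Ups (-s) * M1fn k x := tsum_mul_left

theorem psiUps_single_of_ne {y : X} (hy : y ≠ x) :
    psiUps k (Pi.single x s) y = k y x * Ups s := by
  rw [psiUps, tsum_eq_single x fun z hz => by
    simp [Pi.single_eq_of_ne hz, Pi.single_eq_of_ne hy, Ups_zero]]
  simp [Pi.single_eq_of_ne hy]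

variable {k}

theorem genOp_psiUps_single (hk : KernelSetting k) :
    genOp k (psiUps k (Pi.single x s)) x
      = Ups s * roundTripRate k x - Ups (-s) * M1fn k x ^ 2 :=
  calc genOp k (psiUps k (Pi.single x s)) x
      = ∑' y : {y : X // y ≠ x},
          (Ups s * (k x y * k y x) - Ups (-s) * M1fn k x * k x y) := by
        rw [genOp]
        exact tsum_eq_tsum_subtype_ne x (by simp) fun y => by
          rw [psiUps_single_of_ne k x s y.2, psiUps_single_self]; ring
    _ = _ := by
      rw [((hk.summable_roundTrip x).mul_left _).tsum_sub ((hk.2.1 x).mul_left _),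
        tsum_mul_left, tsum_mul_left, roundTripRate, M1fn]
      ring

theorem bUps_single (hk : KernelSetting k) :
    bUps k (Pi.single x s) (genOp k (Pi.single x s)) x
      = (Real.exp (-s) - 1) * s * (roundTripRate k x + M1fn k x ^ 2) :=
  calc bUps k (Pi.single x s) (genOp k (Pi.single x s)) x
      = ∑' y : {y : X // y ≠ x},
          ((Real.exp (-s) - 1) * s * (k x y * k y x)
            + (Real.exp (-s) - 1) * s * M1fn k x * k x y) := by
        rw [bUps]
        exact tsum_eq_tsum_subtype_ne x (by simp) fun y => by
          rw [genOp_single_of_ne k x s y.2, genOp_single_self]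
          simp only [Pi.single_eq_of_ne y.2, Pi.single_eq_same, zero_sub]
          ring
    _ = _ := by
      rw [((hk.summable_roundTrip x).mul_left _).tsum_add ((hk.2.1 x).mul_left _),
        tsum_mul_left, tsum_mul_left, roundTripRate, M1fn]
      ring

theorem psi2Ups_single_le (hk : KernelSetting k) (hs₀ : 0 ≤ s) (hs₁ : s ≤ 1) :
    psi2Ups k (Pi.single x s) x ≤ (roundTripRate k x + M1fn k x ^ 2 / 2) * s ^ 2 := by
  have hUps : Ups s ≤ s ^ 2 := Ups_le_sq (abs_le.2 ⟨by linarith, hs₁⟩)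
  have hexp : (1 - Real.exp (-s)) * s ≤ s ^ 2 := by
    nlinarith [Real.add_one_le_exp (-s)]
  rw [psi2Ups, genOp_psiUps_single x s hk, bUps_single x s hk]
  nlinarith [hk.roundTripRate_nonneg x, sq_nonneg (M1fn k x), Ups_nonneg (-s)]

end SingleSite

theorem CDUpsAt.trivExt_le_sq {X : Type*} [DecidableEq X] {k : X → X → ℝ} {κ : ℝ}
    {F : ℝ → ℝ} {x : X} (hk : KernelSetting k) (hCD : CDUpsAt k κ F x) {s : ℝ}
    (hs₀ : 0 ≤ s) (hs₁ : s ≤ 1) :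
    trivExt F (s * M1fn k x)
      ≤ (roundTripRate k x + M1fn k x ^ 2 / 2 + |κ| * M1fn k x) * s ^ 2 := by
  have hCDs := hCD _ (bddFun_single x s)
  rw [genOp_single_self, neg_neg, psiUps_single_self] at hCDs
  have hUps : Ups (-s) ≤ s ^ 2 := by
    simpa using Ups_le_sq (r := -s) (by simp [abs_of_nonneg hs₀, hs₁])
  have hψ₀ : 0 ≤ Ups (-s) * M1fn k x := mul_nonneg (Ups_nonneg _) (hk.M1fn_nonneg x)
  have hκ : -(|κ| * M1fn k x * s ^ 2) ≤ κ * (Ups (-s) * M1fn k x) :=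
    calc -(|κ| * M1fn k x * s ^ 2) = -|κ| * (s ^ 2 * M1fn k x) := by ring
      _ ≤ -|κ| * (Ups (-s) * M1fn k x) :=
        mul_le_mul_of_nonpos_left (mul_le_mul_of_nonneg_right hUps (hk.M1fn_nonneg x))
          (neg_nonpos.2 (abs_nonneg κ))
      _ ≤ κ * (Ups (-s) * M1fn k x) := mul_le_mul_of_nonneg_right (neg_abs_le κ) hψ₀
  linarith [psi2Ups_single_le x s hk hs₀ hs₁]

theorem CDUpsAt.eventually_le_sq {X : Type*} {k : X → X → ℝ} {κ : ℝ} {F : ℝ → ℝ} {x : X}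
    (hk : KernelSetting k) (hM1 : 0 < M1fn k x) (hCD : CDUpsAt k κ F x) :
    ∃ C, ∀ᶠ r in 𝓝[>] 0, F r ≤ C * r ^ 2 := by
  classical
  refine ⟨(roundTripRate k x + M1fn k x ^ 2 / 2 + |κ| * M1fn k x) / M1fn k x ^ 2, ?_⟩
  filter_upwards [Ioc_mem_nhdsGT hM1] with r ⟨hr₀, hrM⟩
  have h := hCD.trivExt_le_sq hk (div_nonneg hr₀.le hM1.le) ((div_le_one hM1).2 hrM)
  rw [div_mul_cancel₀ r hM1.ne', trivExt, if_pos hr₀.le] at h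
  exact h.trans_eq (by field_simp)

theorem stmt_18_general {X : Type*} (k : X → X → ℝ) (hk : KernelSetting k)
    (x : X) (hM1 : 0 < M1fn k x)
    (κ δ : ℝ)
    (F : ℝ → ℝ)
    (hlim : Tendsto (fun r => F r / r ^ (1 + δ)) (nhdsWithin 0 (Ioi 0)) (nhds 1))
    (hCD : CDUpsAt k κ F x) :
    1 ≤ δ := by
  obtain ⟨C, hC⟩ := hCD.eventually_le_sq hk hM1
  exact one_le_of_tendsto_div_rpow_of_le_sq one_pos hlim hC

/-- Remark 2.5(iii): if `CD_Υ(κ,F)` holds at some point `x` with `M₁(x) > 0` for a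
CD-function behaving like `r^{1+δ}` near the origin, then necessarily `δ ≥ 1`. -/
theorem stmt_18 {X : Type*} [Countable X] (k : X → X → ℝ) (hk : KernelSetting k)
    (x : X) (hM1 : 0 < M1fn k x)
    (κ δ : ℝ) (hδ : 0 < δ)
    (F : ℝ → ℝ) (hF : IsCDFunction F)
    (hlim : Tendsto (fun r => F r / r ^ (1 + δ)) (nhdsWithin 0 (Ioi 0)) (nhds 1))
    (hCD : CDUpsAt k κ F x) :
    1 ≤ δ :=
  stmt_18_general k hk x hM1 κ δ F hlim hCD
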